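/- Let n ≥ k ≥ 3, k' ≥ 1 with k − k' ≥ 2, and let T be a tree of order n. Then Sd_k(T) ≤ (k / (k − k')) · Sd_{k−k'}(T). Moreover, equality holds if T is a starlike tree with at least k pendant paths all of the maximum length. -/

import Mathlib

open SimpleGraph

/-- The Steiner distance of a vertex set `S` in `G`: the minimum number of edges of a
connected subgraph of `G` whose vertex set contains `S`. -/
noncomputable def steinerDist {V : Type*} (G : SimpleGraph V) (S : Finset V) : ℕ :=
  sInf {n | ∃ H : G.Subgraph, H.Connected ∧ ↑S ⊆ H.verts ∧ H.edgeSet.ncard = n}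

/-- The Steiner `k`-diameter of `G`: the maximum Steiner distance over `k`-subsets. -/
noncomputable def steinerDiam {V : Type*} [Fintype V] [DecidableEq V]
    (G : SimpleGraph V) (k : ℕ) : ℕ :=
  Finset.sup (Finset.univ.filter fun S : Finset V => S.card = k) (steinerDist G)

/-- The Steiner `(k,k')`-eccentricity of a `k'`-subset `S'`. -/
noncomputable def steinerEcc {V : Type*} [Fintype V] [DecidableEq V]
    (G : SimpleGraph V) (k : ℕ) (S' : Finset V) : ℕ :=
  Finset.sup (Finset.univ.filter fun S : Finset V => S.card = k ∧ S' ⊆ S) (steinerDist G)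

/-- The Steiner `(k,k')`-radius of `G`. -/
noncomputable def steinerRadius {V : Type*} [Fintype V] [DecidableEq V]
    (G : SimpleGraph V) (k k' : ℕ) : ℕ :=
  sInf {n | ∃ S' : Finset V, S'.card = k' ∧ steinerEcc G k S' = n}

/-- The diameter of `G`: the maximum distance between two vertices. -/
noncomputable def gDiam {V : Type*} [Fintype V] (G : SimpleGraph V) : ℕ :=
  Finset.sup Finset.univ (fun p : V × V => G.dist p.1 p.2)

/-- The number of pendant vertices (leaves) of `G`. -/
noncomputable def leafCount {V : Type*} [Fintype V] [DecidableEq V]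
    (G : SimpleGraph V) [DecidableRel G.Adj] : ℕ :=
  (Finset.univ.filter fun v => G.degree v = 1).card

/-!
In a tree, the Steiner distance of `S` is the number of edges on the union of the paths between
vertices of `S`. For `#S = p ≥ 3`, the edges that disappear when a vertex `v` is removed from `S`
are private to `v`, and private edge sets of distinct `v`, `w` are disjoint: such an edge lies on
the `v`–`w` path, hence on the path from `v` or from `w` to a third vertex of `S`. So some `v`
carries at most a `1/p` share of the edges, `(p - 1) d(S) ≤ p d(S \ {v})`, whence
`(p - 1) Sd_p ≤ p Sd_{p-1}`, which telescopes to `q Sd_p ≤ p Sd_q` for `2 ≤ q ≤ p`.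

In a starlike tree with centre `c`, a path between two leaves avoiding `c` would consist of
vertices of degree at most 2, so it would contain all neighbours of its vertices and be the whole
tree. Hence the paths from `c` to distinct leaves are edge-disjoint, and `p` leaves at maximal
distance `D` from `c` give `Sd_p = p D`, which is also an upper bound.
-/

open Finset

namespace Finset

theorem exists_card_sub_one_mul_card_le_card_mul_card_sdiff {ι α : Type*} [DecidableEq α]
    {S : Finset ι} (hS : S.Nonempty) {D : Finset α} {E : ι → Finset α}
    (hE : ∀ i ∈ S, E i ⊆ D) (hdisj : (S : Set ι).PairwiseDisjoint E) :
    ∃ i ∈ S, (#S - 1) * #D ≤ #S * #(D \ E i) := by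
  have hsum : ∑ i ∈ S, #(E i) ≤ #D := by
    rw [← card_biUnion hdisj]
    exact card_le_card (biUnion_subset.2 hE)
  have hsplit : ∑ i ∈ S, #(D \ E i) + ∑ i ∈ S, #(E i) = #S * #D := by
    rw [← sum_add_distrib, sum_congr rfl fun i hi => card_sdiff_add_card_eq_card (hE i hi),
      sum_const, smul_eq_mul]
  have hpred : (#S - 1) * #D + #D = #S * #D := by
    rw [← Nat.succ_mul, Nat.succ_eq_add_one, Nat.sub_add_cancel hS.card_pos]
  apply exists_le_of_sum_le hS
  rw [sum_const, smul_eq_mul, ← mul_sum]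
  exact Nat.mul_le_mul_left _ (by omega)

end Finset

namespace SimpleGraph

variable {V : Type*} {G : SimpleGraph V}

theorem steinerDist_le_steinerDiam [Fintype V] [DecidableEq V] (S : Finset V) :
    steinerDist G S ≤ steinerDiam G #S :=
  le_sup (by simp)

theorem steinerDiam_le [Fintype V] [DecidableEq V] {p m : ℕ}
    (h : ∀ S : Finset V, #S = p → steinerDist G S ≤ m) : steinerDiam G p ≤ m :=
  Finset.sup_le fun S hS => h S (mem_filter.1 hS).2

theorem Walk.IsPath.neighborSet_subset_support [Fintype V] [DecidableRel G.Adj] {u v : V}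
    {p : G.Walk u v} (hp : p.IsPath) (huv : u ≠ v) (hu : G.degree u = 1)
    (hv : G.degree v = 1) (hdeg : ∀ a ∈ p.support, G.degree a ≤ 2) {a : V}
    (ha : a ∈ p.support) : G.neighborSet a ⊆ {b | b ∈ p.support} := by
  have hnil : ¬p.Nil := Walk.not_nil_of_ne huv
  -- an endpoint has one neighbour on the path and an interior vertex two, i.e. all of them
  have heq : p.toSubgraph.neighborSet a = G.neighborSet a := by
    refine Set.eq_of_subset_of_ncard_le (p.toSubgraph.neighborSet_subset a) ?_ (Set.toFinite _)
    rw [← Nat.card_coe_set_eq, Nat.card_eq_fintype_card, card_neighborSet_eq_degree]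
    obtain ⟨i, rfl, hi⟩ := Walk.mem_support_iff_exists_getVert.1 ha
    rcases Nat.eq_zero_or_pos i with rfl | hi0
    · rw [Walk.getVert_zero, hp.neighborSet_toSubgraph_startpoint hnil, hu, Set.ncard_singleton]
    rcases hi.eq_or_lt with rfl | hil
    · rw [Walk.getVert_length, hp.neighborSet_toSubgraph_endpoint hnil, hv, Set.ncard_singleton]
    · rw [hp.ncard_neighborSet_toSubgraph_internal_eq_two hi0.ne' hil]
      exact hdeg _ ha
  intro b hb
  rw [← heq] at hb
  exact p.mem_verts_toSubgraph.1 (Subgraph.Adj.snd_mem hb)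

theorem Connected.exists_three_le_degree_of_notMem_support [Fintype V] [DecidableRel G.Adj]
    (hG : G.Connected) {u v c : V} {p : G.Walk u v} (hp : p.IsPath) (huv : u ≠ v)
    (hu : G.degree u = 1) (hv : G.degree v = 1) (hc : c ∉ p.support) :
    ∃ a ∈ p.support, 3 ≤ G.degree a := by
  by_contra! hdeg
  obtain ⟨W⟩ := hG u c
  obtain ⟨d, -, hd₁, hd₂⟩ :=
    W.exists_boundary_dart {b | b ∈ p.support} p.start_mem_support hc
  exact hd₂ (hp.neighborSet_subset_support huv hu hv (fun a ha => Nat.le_of_lt_succ (hdeg a ha))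
    hd₁ d.adj)

namespace IsTree

variable (hT : G.IsTree)

noncomputable def path (u v : V) : G.Walk u v :=
  (hT.existsUnique_path u v).exists.choose

theorem isPath_path (u v : V) : (hT.path u v).IsPath :=
  (hT.existsUnique_path u v).exists.choose_spec

variable {hT} in
theorem eq_path {u v : V} {p : G.Walk u v} (hp : p.IsPath) : p = hT.path u v :=
  (hT.existsUnique_path u v).unique hp (hT.isPath_path u v)

theorem length_path (u v : V) : (hT.path u v).length = G.dist u v := by
  obtain ⟨p, hp, hlen⟩ := (hT.connected u v).exists_path_of_dist
  rw [← eq_path hp, hlen]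

theorem reverse_path (u v : V) : (hT.path u v).reverse = hT.path v u :=
  eq_path (hT.isPath_path u v).reverse

theorem mem_edges_path_comm {u v : V} {e : Sym2 V} :
    e ∈ (hT.path u v).edges ↔ e ∈ (hT.path v u).edges := by
  rw [← hT.reverse_path u v, Walk.edges_reverse, List.mem_reverse]

theorem path_eq_append [DecidableEq V] {u v c : V} (hc : c ∈ (hT.path u v).support) :
    hT.path u v = (hT.path u c).append (hT.path c v) := by
  have hp := hT.isPath_path u v
  rw [← (hT.path u v).take_spec hc, eq_path (hp.takeUntil hc), eq_path (hp.dropUntil hc)]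

theorem dist_eq_add_of_mem_support [DecidableEq V] {u v c : V}
    (hc : c ∈ (hT.path u v).support) : G.dist u v = G.dist u c + G.dist c v := by
  rw [← hT.length_path, hT.path_eq_append hc, Walk.length_append, hT.length_path,
    hT.length_path]

theorem mem_edges_path_or_mem_edges_path [DecidableEq V] {u v : V} (c : V) {e : Sym2 V}
    (he : e ∈ (hT.path u v).edges) :
    e ∈ (hT.path u c).edges ∨ e ∈ (hT.path c v).edges := by
  rw [← List.mem_append, ← Walk.edges_append]
  rw [← eq_path ((hT.path u c).append (hT.path c v)).bypass_isPath] at he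
  exact Walk.edges_bypass_subset_edges _ he

theorem edgeSet_path_subset {H : G.Subgraph} (hH : H.Connected) {u v : V}
    (hu : u ∈ H.verts) (hv : v ∈ H.verts) : (hT.path u v).edgeSet ⊆ H.edgeSet := by
  classical
  obtain ⟨p, hpH⟩ := (H.preconnected_iff_forall_exists_walk_subgraph.1 hH.preconnected) hu hv
  rw [← eq_path p.bypass_isPath, ← Walk.edgeSet_toSubgraph]
  exact Subgraph.edgeSet_mono (Walk.toSubgraph_bypass_le_toSubgraph.trans hpH)

theorem card_toFinset_edges_path [DecidableEq V] (u v : V) :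
    #(hT.path u v).edges.toFinset = G.dist u v := by
  rw [List.toFinset_card_of_nodup (hT.isPath_path u v).isTrail.edges_nodup, Walk.length_edges,
    hT.length_path]

variable [DecidableEq V]

noncomputable def steinerEdges (S : Finset V) : Finset (Sym2 V) :=
  S.biUnion fun a => S.biUnion fun b => (hT.path a b).edges.toFinset

noncomputable def fanEdges (c : V) (S : Finset V) : Finset (Sym2 V) :=
  S.biUnion fun u => (hT.path c u).edges.toFinset

theorem mem_steinerEdges {S : Finset V} {e : Sym2 V} :
    e ∈ hT.steinerEdges S ↔ ∃ a ∈ S, ∃ b ∈ S, e ∈ (hT.path a b).edges := by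
  simp [steinerEdges]

theorem mem_fanEdges {c : V} {S : Finset V} {e : Sym2 V} :
    e ∈ hT.fanEdges c S ↔ ∃ u ∈ S, e ∈ (hT.path c u).edges := by
  simp [fanEdges]

theorem steinerEdges_subset_fanEdges (c : V) (S : Finset V) :
    hT.steinerEdges S ⊆ hT.fanEdges c S := by
  intro e he
  obtain ⟨a, ha, b, hb, he⟩ := hT.mem_steinerEdges.1 he
  rcases hT.mem_edges_path_or_mem_edges_path c he with h | h
  · exact hT.mem_fanEdges.2 ⟨a, ha, hT.mem_edges_path_comm.1 h⟩
  · exact hT.mem_fanEdges.2 ⟨b, hb, h⟩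

theorem fanEdges_subset_steinerEdges {c : V} {S : Finset V} (hc : c ∈ S) :
    hT.fanEdges c S ⊆ hT.steinerEdges S := by
  intro e he
  obtain ⟨u, hu, he⟩ := hT.mem_fanEdges.1 he
  exact hT.mem_steinerEdges.2 ⟨c, hc, u, hu, he⟩

theorem exists_connected_subgraph_edgeSet_eq_fanEdges (c : V) {S : Finset V}
    (hS : S.Nonempty) : ∃ H : G.Subgraph, H.Connected ∧ c ∈ H.verts ∧ ↑S ⊆ H.verts ∧
      H.edgeSet = hT.fanEdges c S := by
  induction hS using Finset.Nonempty.cons_induction with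
  | singleton a =>
    refine ⟨(hT.path c a).toSubgraph, (hT.path c a).toSubgraph_connected,
      Walk.start_mem_verts_toSubgraph _, by simp, ?_⟩
    ext e
    simp [fanEdges, Walk.edgeSet]
  | cons a S ha hS ih =>
    obtain ⟨H, hH, hcH, hSH, hedges⟩ := ih
    refine ⟨(hT.path c a).toSubgraph ⊔ H, Subgraph.connected_sup
      (hT.path c a).toSubgraph_connected.preconnected hH.preconnected
      ⟨c, Walk.start_mem_verts_toSubgraph _, hcH⟩, Or.inr hcH, ?_, ?_⟩
    · rw [coe_cons, Set.insert_subset_iff]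
      exact ⟨Or.inl (Walk.end_mem_verts_toSubgraph _), hSH.trans le_sup_right⟩
    · ext e
      simp [Subgraph.edgeSet_sup, hedges, fanEdges, Walk.edgeSet]

theorem steinerDist_le_card_fanEdges (c : V) {S : Finset V} (hS : S.Nonempty) :
    steinerDist G S ≤ #(hT.fanEdges c S) := by
  obtain ⟨H, hH, -, hSH, hedges⟩ := hT.exists_connected_subgraph_edgeSet_eq_fanEdges c hS
  exact Nat.sInf_le ⟨H, hH, hSH, by rw [hedges, Set.ncard_coe_finset]⟩

theorem card_steinerEdges_le_steinerDist [Finite V] {S : Finset V} (hS : S.Nonempty) :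
    #(hT.steinerEdges S) ≤ steinerDist G S := by
  obtain ⟨H₀, hH₀, -, hSH₀, -⟩ :=
    hT.exists_connected_subgraph_edgeSet_eq_fanEdges hS.choose hS
  refine le_csInf ⟨_, H₀, hH₀, hSH₀, rfl⟩ ?_
  rintro _ ⟨H, hH, hSH, rfl⟩
  rw [← Set.ncard_coe_finset]
  refine Set.ncard_le_ncard (fun e he => ?_) (Set.toFinite _)
  obtain ⟨a, ha, b, hb, he⟩ := hT.mem_steinerEdges.1 he
  exact hT.edgeSet_path_subset hH (hSH ha) (hSH hb) he

theorem steinerDist_eq_card_steinerEdges [Finite V] {S : Finset V} (hS : S.Nonempty) :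
    steinerDist G S = #(hT.steinerEdges S) := by
  obtain ⟨c, hc⟩ := hS
  refine le_antisymm ?_ (hT.card_steinerEdges_le_steinerDist ⟨c, hc⟩)
  rw [(hT.steinerEdges_subset_fanEdges c S).antisymm (hT.fanEdges_subset_steinerEdges hc)]
  exact hT.steinerDist_le_card_fanEdges c ⟨c, hc⟩

theorem steinerEdges_mono {S T : Finset V} (h : S ⊆ T) :
    hT.steinerEdges S ⊆ hT.steinerEdges T := by
  intro e he
  obtain ⟨a, ha, b, hb, he⟩ := hT.mem_steinerEdges.1 he
  exact hT.mem_steinerEdges.2 ⟨a, h ha, b, h hb, he⟩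

theorem mem_steinerEdges_erase {S : Finset V} {a b x : V} {e : Sym2 V} (ha : a ∈ S)
    (hb : b ∈ S) (hax : a ≠ x) (hbx : b ≠ x) (he : e ∈ (hT.path a b).edges) :
    e ∈ hT.steinerEdges (S.erase x) :=
  hT.mem_steinerEdges.2 ⟨a, mem_erase.2 ⟨hax, ha⟩, b, mem_erase.2 ⟨hbx, hb⟩, he⟩

theorem disjoint_steinerEdges_sdiff_erase {S : Finset V} (hS : 3 ≤ #S) {v w : V} (hv : v ∈ S)
    (hw : w ∈ S) (hvw : v ≠ w) :
    Disjoint (hT.steinerEdges S \ hT.steinerEdges (S.erase v))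
      (hT.steinerEdges S \ hT.steinerEdges (S.erase w)) := by
  simp only [Finset.disjoint_left, mem_sdiff]
  rintro e ⟨heS, hev⟩ ⟨-, hew⟩
  obtain ⟨a, ha, b, hb, he⟩ := hT.mem_steinerEdges.1 heS
  have hv' : a = v ∨ b = v := by
    by_contra! h
    exact hev (hT.mem_steinerEdges_erase ha hb h.1 h.2 he)
  have hw' : a = w ∨ b = w := by
    by_contra! h
    exact hew (hT.mem_steinerEdges_erase ha hb h.1 h.2 he)
  have hevw : e ∈ (hT.path v w).edges := by
    rcases hv' with rfl | rfl <;> rcases hw' with rfl | rfl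
    exacts [absurd rfl hvw, he, hT.mem_edges_path_comm.1 he, absurd rfl hvw]
  obtain ⟨u, hu⟩ : ((S.erase v).erase w).Nonempty := by
    rw [← card_pos, card_erase_of_mem (mem_erase.2 ⟨hvw.symm, hw⟩), card_erase_of_mem hv]
    omega
  obtain ⟨huw, huv, hu⟩ : u ≠ w ∧ u ≠ v ∧ u ∈ S := by simpa using hu
  rcases hT.mem_edges_path_or_mem_edges_path u hevw with h | h
  · exact hew (hT.mem_steinerEdges_erase hv hu hvw huw h)
  · exact hev (hT.mem_steinerEdges_erase hu hw huv hvw.symm h)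

theorem card_fanEdges_le_sum_dist (c : V) (S : Finset V) :
    #(hT.fanEdges c S) ≤ ∑ u ∈ S, G.dist c u :=
  card_biUnion_le.trans (sum_le_sum fun u _ => (hT.card_toFinset_edges_path c u).le)

theorem steinerDist_eq_sum_dist [Finite V] {c : V} {S : Finset V} (hS : S.Nontrivial)
    (hc : ∀ u ∈ S, ∀ v ∈ S, u ≠ v → c ∈ (hT.path u v).support) :
    steinerDist G S = ∑ u ∈ S, G.dist c u := by
  have hdisj : (S : Set V).PairwiseDisjoint fun u => (hT.path c u).edges.toFinset := by
    intro u hu v hv huv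
    have hnodup := (hT.isPath_path u v).isTrail.edges_nodup
    rw [hT.path_eq_append (hc u hu v hv huv), Walk.edges_append, ← hT.reverse_path c u,
      Walk.edges_reverse] at hnodup
    simpa [Function.onFun, List.disjoint_toFinset_iff_disjoint] using
      List.disjoint_of_nodup_append hnodup
  have hfan : hT.steinerEdges S = hT.fanEdges c S := by
    refine (hT.steinerEdges_subset_fanEdges c S).antisymm fun e he => ?_
    obtain ⟨u, hu, he⟩ := hT.mem_fanEdges.1 he
    obtain ⟨v, hv, hvu⟩ := hS.exists_ne u
    refine hT.mem_steinerEdges.2 ⟨v, hv, u, hu, ?_⟩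
    rw [hT.path_eq_append (hc v hv u hu hvu), Walk.edges_append]
    exact List.mem_append_right _ he
  rw [hT.steinerDist_eq_card_steinerEdges hS.nonempty, hfan, fanEdges, card_biUnion hdisj]
  exact sum_congr rfl fun u _ => hT.card_toFinset_edges_path c u

end IsTree

theorem IsTree.exists_sub_one_mul_steinerDist_le_erase [DecidableEq V] [Finite V]
    (hT : G.IsTree) {S : Finset V} (hS : 3 ≤ #S) :
    ∃ v ∈ S, (#S - 1) * steinerDist G S ≤ #S * steinerDist G (S.erase v) := by
  have hne : S.Nonempty := card_pos.1 (by omega)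
  obtain ⟨v, hv, hle⟩ := exists_card_sub_one_mul_card_le_card_mul_card_sdiff hne
    (fun _ _ => sdiff_subset) fun v hv w hw hvw =>
      hT.disjoint_steinerEdges_sdiff_erase hS hv hw hvw
  refine ⟨v, hv, ?_⟩
  rwa [Finset.sdiff_sdiff_eq_self (hT.steinerEdges_mono (S.erase_subset v)),
    ← hT.steinerDist_eq_card_steinerEdges hne,
    ← hT.steinerDist_eq_card_steinerEdges
      (one_lt_card_iff_nontrivial.1 (by omega)).erase_nonempty] at hle

theorem IsTree.steinerDist_le_sum_dist [DecidableEq V] (hT : G.IsTree) (c : V) {S : Finset V}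
    (hS : S.Nonempty) : steinerDist G S ≤ ∑ u ∈ S, G.dist c u :=
  (hT.steinerDist_le_card_fanEdges c hS).trans (hT.card_fanEdges_le_sum_dist c S)

section Diam

variable [Fintype V] [DecidableEq V]

theorem IsTree.sub_one_mul_steinerDiam_le (hT : G.IsTree) {p : ℕ} (hp : 3 ≤ p) :
    (p - 1) * steinerDiam G p ≤ p * steinerDiam G (p - 1) := by
  rcases (univ.filter fun S : Finset V => #S = p).eq_empty_or_nonempty with h | h
  · simp [steinerDiam, h]
  obtain ⟨S, hS, hsup⟩ := exists_mem_eq_sup _ h (steinerDist G)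
  obtain rfl := (mem_filter.1 hS).2
  obtain ⟨v, hv, hle⟩ := hT.exists_sub_one_mul_steinerDist_le_erase hp
  rw [show steinerDiam G #S = steinerDist G S from hsup]
  refine hle.trans (Nat.mul_le_mul_left _ ?_)
  rw [← card_erase_of_mem hv]
  exact steinerDist_le_steinerDiam _

theorem IsTree.mul_steinerDiam_le_of_le (hT : G.IsTree) {p q : ℕ} (hq : 2 ≤ q) (hqp : q ≤ p) :
    q * steinerDiam G p ≤ p * steinerDiam G q := by
  induction p, hqp using Nat.le_induction with
  | base => exact le_rfl
  | succ p hqp ih =>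
    have step := hT.sub_one_mul_steinerDiam_le (p := p + 1) (by omega)
    rw [Nat.add_sub_cancel] at step
    refine Nat.le_of_mul_le_mul_left ?_ (by omega : 0 < p)
    calc p * (q * steinerDiam G (p + 1)) = q * (p * steinerDiam G (p + 1)) := by ring
      _ ≤ q * ((p + 1) * steinerDiam G p) := Nat.mul_le_mul_left q step
      _ = (p + 1) * (q * steinerDiam G p) := by ring
      _ ≤ (p + 1) * (p * steinerDiam G q) := Nat.mul_le_mul_left _ ih
      _ = p * ((p + 1) * steinerDiam G q) := by ring

end Diam

section Starlike

variable [Fintype V] [DecidableEq V] [DecidableRel G.Adj]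

theorem IsTree.degree_eq_one_of_forall_dist_le (hT : G.IsTree) {c w : V} (hwc : w ≠ c)
    (hw : ∀ y, G.dist c y ≤ G.dist c w) : G.degree w = 1 := by
  set p := hT.path c w
  have hp : p.IsPath := hT.isPath_path c w
  have hsub : G.neighborFinset w ⊆ {p.penultimate} := by
    intro y hy
    rw [mem_singleton]
    rw [mem_neighborFinset] at hy
    refine hT.isAcyclic.eq_penultimate_of_adj_end hp hy ?_
    refine hT.isAcyclic.mem_support_of_ne_mem_support_of_adj_of_isPath hp
      (hT.isPath_path c y) hy fun hwy => ?_
    have hsplit := hT.dist_eq_add_of_mem_support hwy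
    have hwy_pos := hT.connected.pos_dist_of_ne (G.ne_of_adj hy)
    have := hw y
    omega
  have hmem : p.penultimate ∈ G.neighborFinset w := by
    rw [mem_neighborFinset]
    exact (p.adj_penultimate (Walk.not_nil_of_ne hwc.symm)).symm
  rw [← card_neighborFinset_eq_degree, (Nonempty.subset_singleton_iff ⟨_, hmem⟩).1 hsub,
    card_singleton]

theorem IsTree.dist_le_sup_dist_leaves [Nontrivial V] (hT : G.IsTree) (c v : V) :
    G.dist c v ≤ (univ.filter fun u => G.degree u = 1).sup (G.dist c) := by
  obtain ⟨w, -, hw⟩ := exists_max_image univ (G.dist c) univ_nonempty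
  have hwc : w ≠ c := by
    rintro rfl
    obtain ⟨y, hy⟩ := exists_ne w
    have := hw y (mem_univ y)
    rw [dist_self] at this
    exact hy (hT.connected.dist_eq_zero_iff.1 (by omega)).symm
  calc G.dist c v ≤ G.dist c w := hw v (mem_univ v)
    _ ≤ _ := le_sup (by simp [hT.degree_eq_one_of_forall_dist_le hwc fun y => hw y (mem_univ y)])

theorem IsTree.mem_support_path_of_starlike (hT : G.IsTree) {c : V}
    (hc : ∀ w, 3 ≤ G.degree w → w = c) {u v : V} (hu : G.degree u = 1) (hv : G.degree v = 1)
    (huv : u ≠ v) : c ∈ (hT.path u v).support := by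
  by_contra hnot
  obtain ⟨a, ha, h3⟩ :=
    hT.connected.exists_three_le_degree_of_notMem_support (hT.isPath_path u v) huv hu hv hnot
  exact hnot (hc a h3 ▸ ha)

theorem IsTree.steinerDiam_eq_mul_of_starlike (hT : G.IsTree) {c : V} (hc₃ : 3 ≤ G.degree c)
    (hc : ∀ w, 3 ≤ G.degree w → w = c) {p : ℕ} (hp : 2 ≤ p)
    (hcount : p ≤ #(univ.filter fun v => G.degree v = 1 ∧
      G.dist c v = (univ.filter fun u => G.degree u = 1).sup (G.dist c))) :
    steinerDiam G p = p * (univ.filter fun u => G.degree u = 1).sup (G.dist c) := by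
  set D := (univ.filter fun u => G.degree u = 1).sup (G.dist c)
  obtain ⟨y, hy⟩ := (G.degree_pos_iff_exists_adj c).1 (by omega)
  have : Nontrivial V := ⟨⟨c, y, G.ne_of_adj hy⟩⟩
  refine le_antisymm (steinerDiam_le fun S hS => ?_) ?_
  · calc steinerDist G S ≤ ∑ u ∈ S, G.dist c u :=
          hT.steinerDist_le_sum_dist c (card_pos.1 (by omega))
      _ ≤ ∑ u ∈ S, D := sum_le_sum fun u _ => hT.dist_le_sup_dist_leaves c u
      _ = p * D := by rw [sum_const, hS, smul_eq_mul]
  · obtain ⟨S, hSsub, rfl⟩ := exists_subset_card_eq hcount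
    have hleaf : ∀ u ∈ S, G.degree u = 1 ∧ G.dist c u = D := fun u hu =>
      (mem_filter.1 (hSsub hu)).2
    have hcentre : ∀ u ∈ S, ∀ v ∈ S, u ≠ v → c ∈ (hT.path u v).support :=
      fun u hu v hv huv => hT.mem_support_path_of_starlike hc (hleaf u hu).1 (hleaf v hv).1 huv
    calc #S * D = ∑ u ∈ S, G.dist c u := by
          rw [sum_congr rfl fun u hu => (hleaf u hu).2, sum_const, smul_eq_mul]
      _ = steinerDist G S :=
          (hT.steinerDist_eq_sum_dist (one_lt_card_iff_nontrivial.1 (by omega)) hcentre).symm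
      _ ≤ steinerDiam G #S := steinerDist_le_steinerDiam S

end Starlike

end SimpleGraph

theorem stmt15_general {V : Type*} [Fintype V] [DecidableEq V] (G : SimpleGraph V)
    [DecidableRel G.Adj] (hT : G.IsTree) (k k' : ℕ) (hkk' : k' + 2 ≤ k) :
    ((steinerDiam G k : ℝ) ≤ (k / ((k : ℝ) - k')) * steinerDiam G (k - k')) ∧
    (∀ c : V, 3 ≤ G.degree c → (∀ w, 3 ≤ G.degree w → w = c) →
      k ≤ (Finset.univ.filter fun v => G.degree v = 1 ∧
            G.dist c v =
              Finset.sup (Finset.univ.filter fun u => G.degree u = 1) (G.dist c)).card →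
      (steinerDiam G k : ℝ) = (k / ((k : ℝ) - k')) * steinerDiam G (k - k')) := by
  have hcast : ((k - k' : ℕ) : ℝ) = k - k' := Nat.cast_sub (by omega)
  have hpos : (0 : ℝ) < k - k' := by rw [← hcast]; exact_mod_cast (by omega : 0 < k - k')
  refine ⟨?_, fun c hc₃ hc hcount => ?_⟩
  · have h := hT.mul_steinerDiam_le_of_le (q := k - k') (by omega) (Nat.sub_le k k')
    rw [div_mul_eq_mul_div, le_div_iff₀ hpos, ← hcast, mul_comm]
    exact_mod_cast h
  · rw [hT.steinerDiam_eq_mul_of_starlike hc₃ hc (by omega) hcount,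
      hT.steinerDiam_eq_mul_of_starlike hc₃ hc (by omega) ((Nat.sub_le k k').trans hcount)]
    push_cast [hcast]
    field_simp

theorem stmt15 {V : Type*} [Fintype V] [DecidableEq V] (G : SimpleGraph V)
    [DecidableRel G.Adj] (hT : G.IsTree) (n k k' : ℕ) (hn : Fintype.card V = n)
    (hk : 3 ≤ k) (hkn : k ≤ n) (hk' : 1 ≤ k') (hkk' : k' + 2 ≤ k) :
    ((steinerDiam G k : ℝ) ≤ (k / ((k : ℝ) - k')) * steinerDiam G (k - k')) ∧
    (∀ c : V, 3 ≤ G.degree c → (∀ w, 3 ≤ G.degree w → w = c) →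
      k ≤ (Finset.univ.filter fun v => G.degree v = 1 ∧
            G.dist c v =
              Finset.sup (Finset.univ.filter fun u => G.degree u = 1) (G.dist c)).card →
      (steinerDiam G k : ℝ) = (k / ((k : ℝ) - k')) * steinerDiam G (k - k')) :=
  stmt15_general G hT k k' hkk'
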